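/- arXiv:1308.6702 — 2 statements merged into one kernel-verified Lean document; each statement's English description precedes it below -/
import Mathlib

section
/- Let Ω be a finite set, let Q ⊆ ℝ^Ω be a closed convex set of probability distributions, let p* be a probability distribution on Ω, and let q* ∈ Q minimize D(p*‖q) over q ∈ Q, with D(p*‖q*) < ∞. Then for every q ∈ Q, Σ_{x∈Ω} q(x) · p*(x)/q*(x) ≤ 1 (where terms with p*(x) = 0 are read as 0). -/
open Filter Finset

noncomputable section

variable {Ω : Type*}

/-- `p` is a probability distribution on the finite set `Ω`. -/
def IsProbDist [Fintype Ω] (p : Ω → ℝ) : Prop :=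
  (∀ x, 0 ≤ p x) ∧ ∑ x, p x = 1

/-- Relative entropy `D(p‖q)`, valued in `EReal`, equal to `⊤` when `p` is not
absolutely continuous with respect to `q`. -/
def relEnt [Fintype Ω] (p q : Ω → ℝ) : EReal :=
  if ∀ x, q x = 0 → p x = 0
  then ((∑ x, p x * Real.log (p x / q x) : ℝ) : EReal)
  else ⊤

/-- An adaptive strategy: in round `k` (0-indexed), having observed the previous
`k` samples, it outputs a distribution on `Ω` for the next sample. -/
def Strategy (Ω : Type*) : Type _ := (k : ℕ) → (Fin k → Ω) → (Ω → ℝ)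

/-- A strategy is a valid adaptive `P`-strategy if every distribution it plays lies in `P`. -/
def Strategy.Valid (P : Set (Ω → ℝ)) (σ : Strategy Ω) : Prop :=
  ∀ k (h : Fin k → Ω), σ k h ∈ P

/-- The probability assigned by an adaptive strategy to the sample sequence `x ∈ Ω^n`. -/
def Strategy.prob (σ : Strategy Ω) {n : ℕ} (x : Fin n → Ω) : ℝ :=
  ∏ k : Fin n, σ k.1 (fun i : Fin k.1 => x ⟨i.1, i.2.trans k.2⟩) (x k)

/-- The probability assigned by an adaptive strategy to a set `A ⊆ Ω^n`. -/
def Strategy.setProb (σ : Strategy Ω) {n : ℕ} (A : Finset (Fin n → Ω)) : ℝ :=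
  ∑ x ∈ A, σ.prob x

/-! Moving from `q*` towards `q ∈ Q` along the segment stays in `Q` and, for `t < 1`, keeps the
support of `p*` inside that of the moving point. So the log-likelihood
`t ↦ ∑ p*(x) log((1 - t) q*(x) + t q(x))` is maximal at `t = 0` on `[0, 1)`, and its derivative
there, `∑ p*(x) (q(x) - q*(x)) / q*(x) = ∑ q(x) p*(x) / q*(x) - 1`, is nonpositive. -/

open Real Topology Set

theorem HasDerivAt.nonpos_of_eventually_le_nhdsGT {f : ℝ → ℝ} {f' a : ℝ}
    (hf : HasDerivAt f f' a) (hmax : ∀ᶠ t in 𝓝[>] a, f t ≤ f a) : f' ≤ 0 := by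
  have hslope : Tendsto (slope f a) (𝓝[>] a) (𝓝 f') :=
    (hasDerivWithinAt_iff_tendsto_slope' (lt_irrefl a)).1 hf.hasDerivWithinAt
  refine le_of_tendsto hslope ?_
  filter_upwards [hmax, self_mem_nhdsWithin] with t hle hat
  rw [slope_def_field]
  exact div_nonpos_of_nonpos_of_nonneg (sub_nonpos.2 hle) (sub_nonneg.2 (le_of_lt hat))

theorem eq_zero_of_one_sub_mul_add_mul_eq_zero {a b t : ℝ} (ha : 0 ≤ a) (hb : 0 ≤ b)
    (ht₀ : 0 ≤ t) (ht₁ : t < 1) (h : (1 - t) * a + t * b = 0) : a = 0 := by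
  have hta : (1 - t) * a = 0 :=
    ((add_eq_zero_iff_of_nonneg (by nlinarith) (mul_nonneg ht₀ hb)).1 h).1
  exact (mul_eq_zero.1 hta).resolve_left (by linarith)

section RelativeEntropy

variable {Ω : Type*} [Fintype Ω]

theorem support_subset_of_relEnt_ne_top {p q : Ω → ℝ} (h : relEnt p q ≠ ⊤) :
    ∀ x, q x = 0 → p x = 0 := by
  by_contra hpq
  exact h (if_neg hpq)

theorem relEnt_eq_sum_mul_log_sub {p q : Ω → ℝ} (hpq : ∀ x, q x = 0 → p x = 0) :
    relEnt p q = ((∑ x, p x * log (p x) - ∑ x, p x * log (q x) : ℝ) : EReal) := by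
  rw [relEnt, if_pos hpq]
  congr 2
  rw [← Finset.sum_sub_distrib]
  refine Finset.sum_congr rfl fun x _ => ?_
  by_cases hp : p x = 0
  · simp [hp]
  · rw [log_div hp (mt (hpq x) hp)]
    ring

theorem sum_mul_log_le_of_relEnt_le {p q₀ q₁ : Ω → ℝ} (h₀ : ∀ x, q₀ x = 0 → p x = 0)
    (h₁ : ∀ x, q₁ x = 0 → p x = 0) (h : relEnt p q₀ ≤ relEnt p q₁) :
    ∑ x, p x * log (q₁ x) ≤ ∑ x, p x * log (q₀ x) := by
  rw [relEnt_eq_sum_mul_log_sub h₀, relEnt_eq_sum_mul_log_sub h₁, EReal.coe_le_coe_iff]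
    at h
  linarith

theorem hasDerivAt_sum_mul_log_segment {p q₀ q₁ : Ω → ℝ} (hpq : ∀ x, q₀ x = 0 → p x = 0) :
    HasDerivAt (fun t => ∑ x, p x * log ((1 - t) * q₀ x + t * q₁ x))
      (∑ x, p x * ((q₁ x - q₀ x) / q₀ x)) 0 := by
  refine HasDerivAt.fun_sum fun x _ => ?_
  by_cases hp : p x = 0
  · simpa [hp] using hasDerivAt_const (0 : ℝ) (0 : ℝ)
  have hseg : HasDerivAt (fun t => (1 - t) * q₀ x + t * q₁ x) (q₁ x - q₀ x) 0 := by
    simpa [neg_add_eq_sub] using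
      (((hasDerivAt_id (0 : ℝ)).const_sub 1).mul_const (q₀ x)).fun_add
        ((hasDerivAt_id (0 : ℝ)).mul_const (q₁ x))
  simpa using (hseg.log (by simpa using mt (hpq x) hp)).const_mul (p x)

theorem sum_mul_sub_div_eq {p q₀ q₁ : Ω → ℝ} (hpq : ∀ x, q₀ x = 0 → p x = 0) :
    ∑ x, p x * ((q₁ x - q₀ x) / q₀ x) = ∑ x, q₁ x * (p x / q₀ x) - ∑ x, p x := by
  rw [← Finset.sum_sub_distrib]
  refine Finset.sum_congr rfl fun x _ => ?_
  by_cases hq : q₀ x = 0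
  · simp [hq, hpq x hq]
  · field_simp

end RelativeEntropy

theorem likelihood_ratio_mean_le_one_of_minimizer_general {Ω : Type*} [Fintype Ω]
    (Q : Set (Ω → ℝ)) (hQ : ∀ q ∈ Q, IsProbDist q)
    (hQconv : Convex ℝ Q)
    (pstar : Ω → ℝ) (hpstar : IsProbDist pstar)
    (qstar : Ω → ℝ) (hqstar : qstar ∈ Q)
    (hmin : ∀ q ∈ Q, relEnt pstar qstar ≤ relEnt pstar q)
    (hfin : relEnt pstar qstar ≠ ⊤) :
    ∀ q ∈ Q, ∑ x, q x * (pstar x / qstar x) ≤ 1 := by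
  intro q hq
  have hsupp := support_subset_of_relEnt_ne_top hfin
  have hmax : ∀ᶠ t in 𝓝[>] (0 : ℝ), ∑ x, pstar x * log ((1 - t) * qstar x + t * q x)
      ≤ ∑ x, pstar x * log ((1 - 0) * qstar x + 0 * q x) := by
    filter_upwards [Ioo_mem_nhdsGT one_pos] with t ⟨ht₀, ht₁⟩
    have hmem : (1 - t) • qstar + t • q ∈ Q :=
      hQconv hqstar hq (by linarith) ht₀.le (by ring)
    have hsupp_t : ∀ x, ((1 - t) • qstar + t • q) x = 0 → pstar x = 0 := fun x hx =>
      hsupp x <| eq_zero_of_one_sub_mul_add_mul_eq_zero ((hQ _ hqstar).1 x) ((hQ q hq).1 x)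
        ht₀.le ht₁ hx
    simpa using sum_mul_log_le_of_relEnt_le hsupp hsupp_t (hmin _ hmem)
  have hderiv := (hasDerivAt_sum_mul_log_segment hsupp).nonpos_of_eventually_le_nhdsGT hmax
  rw [sum_mul_sub_div_eq hsupp, hpstar.2] at hderiv
  linarith

/-- If `q* ∈ Q` minimizes `D(p*‖q)` over the closed convex set `Q` of probability
distributions, with `D(p*‖q*) < ∞`, then for every `q ∈ Q`,
`∑_x q(x) · p*(x)/q*(x) ≤ 1` (terms with `p*(x) = 0` read as `0`; in Lean, division
by zero is zero, so terms with `q*(x) = 0`, which force `p*(x) = 0`, vanish). -/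
theorem likelihood_ratio_mean_le_one_of_minimizer {Ω : Type*} [Fintype Ω]
    (Q : Set (Ω → ℝ)) (hQ : ∀ q ∈ Q, IsProbDist q)
    (hQclosed : IsClosed Q) (hQconv : Convex ℝ Q)
    (pstar : Ω → ℝ) (hpstar : IsProbDist pstar)
    (qstar : Ω → ℝ) (hqstar : qstar ∈ Q)
    (hmin : ∀ q ∈ Q, relEnt pstar qstar ≤ relEnt pstar q)
    (hfin : relEnt pstar qstar ≠ ⊤) :
    ∀ q ∈ Q, ∑ x, q x * (pstar x / qstar x) ≤ 1 :=
  likelihood_ratio_mean_le_one_of_minimizer_general Q hQ hQconv pstar hpstar qstar hqstar hmin hfin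
end
end

section
/- Let Ω be a finite set, let Q ⊆ ℝ^Ω be a closed convex set of probability distributions, let p* be a probability distribution on Ω and q* ∈ Q a minimizer of D(p*‖q) over q ∈ Q with D(p*‖q*) < ∞. Then for every adaptive Q-strategy q̂ and every n, the expected likelihood ratio satisfies E_{q̂}[ Π_{i=1}^n p*(X_i)/q*(X_i) ] ≤ 1, where X_1,…,X_n are distributed according to q̂ (i.e., the sequence of likelihood ratios Π_{i=1}^n p*(X_i)/q*(X_i) is a supermartingale with respect to q̂). -/
open Filter Finset

noncomputable section

variable {Ω : Type*}

/-!
Since `q*` minimizes `D(p*‖·)` on the convex set `Q`, the derivative of `t ↦ D(p*‖q* + t (q - q*))`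
at `t = 0⁺` is nonnegative for every `q ∈ Q`; this first-order condition reads
`∑ₓ q(x) p*(x)/q*(x) ≤ 1`. So every round of an adaptive `Q`-strategy multiplies the expected
likelihood ratio by at most one, whatever the history, and the bound follows by induction on `n`.
-/

open Set Real

theorem HasDerivAt.nonpos_of_isMaxOn_Ico {f : ℝ → ℝ} {f' a b : ℝ} (hf : HasDerivAt f f' a)
    (hab : a < b) (hmax : IsMaxOn f (Ico a b) a) : f' ≤ 0 := by
  have hcone : b - a ∈ posTangentConeAt (Ico a b) a :=
    sub_mem_posTangentConeAt_of_openSegment_subset <| by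
      rw [openSegment_eq_Ioo hab]; exact Ioo_subset_Ico_self
  have := hmax.localize.hasFDerivWithinAt_nonpos hf.hasFDerivAt.hasFDerivWithinAt hcone
  simp only [ContinuousLinearMap.toSpanSingleton_apply, smul_eq_mul] at this
  exact nonpos_of_mul_nonpos_right this (sub_pos.2 hab)

section RelEnt

variable [Fintype Ω] {p q : Ω → ℝ}

theorem hasDerivAt_sum_mul_log_add_mul (b : Ω → ℝ) (hpq : ∀ x, q x = 0 → p x = 0) :
    HasDerivAt (fun t => ∑ x, p x * log (q x + t * b x)) (∑ x, p x * (b x / q x)) 0 := by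
  refine HasDerivAt.fun_sum fun x _ => ?_
  by_cases hpx : p x = 0
  · simpa [hpx] using hasDerivAt_const (0 : ℝ) (0 : ℝ)
  · have hlog := (((hasDerivAt_id (0 : ℝ)).mul_const (b x)).const_add (q x)).log
      (by simpa using mt (hpq x) hpx)
    simpa [div_eq_inv_mul] using hlog.const_mul (p x)

theorem absCont_of_relEnt_ne_top (h : relEnt p q ≠ ⊤) : ∀ x, q x = 0 → p x = 0 := by
  by_contra hpq
  exact h (if_neg hpq)

theorem relEnt_eq_sub (hpq : ∀ x, q x = 0 → p x = 0) :
    relEnt p q = ((∑ x, p x * log (p x) - ∑ x, p x * log (q x) : ℝ) : EReal) := by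
  rw [relEnt, if_pos hpq, ← sum_sub_distrib]
  congr 2 with x
  by_cases hpx : p x = 0
  · simp [hpx]
  · rw [log_div hpx (mt (hpq x) hpx), mul_sub]

theorem sum_mul_sub_div_nonpos_of_relEnt_le {Q : Set (Ω → ℝ)} (hQ : ∀ q ∈ Q, 0 ≤ q)
    (hQconv : Convex ℝ Q) {qstar : Ω → ℝ} (hqstar : qstar ∈ Q)
    (hmin : ∀ q ∈ Q, relEnt p qstar ≤ relEnt p q) (hfin : relEnt p qstar ≠ ⊤) (hq : q ∈ Q) :
    ∑ x, p x * ((q x - qstar x) / qstar x) ≤ 0 := by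
  have habs := absCont_of_relEnt_ne_top hfin
  have hseg : ∀ t ∈ Ico (0 : ℝ) 1, ∀ x, qstar x + t * (q x - qstar x) = 0 → p x = 0 := by
    intro t ⟨ht₀, ht₁⟩ x hx
    refine habs x (le_antisymm ?_ (hQ qstar hqstar x))
    nlinarith [mul_nonneg ht₀ (hQ q hq x), mul_nonneg (sub_nonneg.2 ht₁.le) (hQ qstar hqstar x)]
  refine (hasDerivAt_sum_mul_log_add_mul _ habs).nonpos_of_isMaxOn_Ico one_pos fun t ht => ?_
  have hle : relEnt p qstar ≤ relEnt p fun x => qstar x + t * (q x - qstar x) :=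
    hmin _ (hQconv.add_smul_sub_mem hqstar hq (Ico_subset_Icc_self ht))
  rw [relEnt_eq_sub habs, relEnt_eq_sub (hseg t ht), EReal.coe_le_coe_iff] at hle
  simp only [mem_ofPred_eq, zero_mul, add_zero]
  linarith

theorem sum_mul_div_le_one_of_relEnt_le {Q : Set (Ω → ℝ)} (hQ : ∀ q ∈ Q, 0 ≤ q)
    (hQconv : Convex ℝ Q) (hp : ∑ x, p x = 1) {qstar : Ω → ℝ} (hqstar : qstar ∈ Q)
    (hmin : ∀ q ∈ Q, relEnt p qstar ≤ relEnt p q) (hfin : relEnt p qstar ≠ ⊤) (hq : q ∈ Q) :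
    ∑ x, q x * (p x / qstar x) ≤ 1 := by
  have habs := absCont_of_relEnt_ne_top hfin
  have hsplit : ∑ x, q x * (p x / qstar x) =
      ∑ x, p x * ((q x - qstar x) / qstar x) + ∑ x, p x := by
    rw [← sum_add_distrib]
    congr 1 with x
    by_cases hx : qstar x = 0
    · simp [hx, habs x hx]
    · field_simp
      ring
  linarith [sum_mul_sub_div_nonpos_of_relEnt_le hQ hQconv hqstar hmin hfin hq]

end RelEnt

theorem Fin.sum_univ_pi_snoc [Fintype Ω] {M : Type*} [AddCommMonoid M] {n : ℕ}
    (f : (Fin (n + 1) → Ω) → M) : ∑ z, f z = ∑ x : Fin n → Ω, ∑ y, f (Fin.snoc x y) := by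
  rw [← (Fin.snocEquiv fun _ => Ω).sum_comp, Fintype.sum_prod_type_right]
  rfl

namespace Strategy

theorem prob_snoc (σ : Strategy Ω) {n : ℕ} (x : Fin n → Ω) (y : Ω) :
    σ.prob (Fin.snoc x y : Fin (n + 1) → Ω) = σ.prob x * σ n x y := by
  simp only [prob, Fin.prod_univ_castSucc, Fin.val_castSucc, Fin.val_last, Fin.snoc_castSucc,
    Fin.snoc_last]
  congr 1
  · refine prod_congr rfl fun k _ => ?_
    congr 1 with i
    exact Fin.snoc_castSucc (α := fun _ => Ω) y x ⟨i, i.2.trans k.2⟩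
  · congr 1 with i
    exact Fin.snoc_castSucc (α := fun _ => Ω) y x i

theorem prob_nonneg {σ : Strategy Ω} (hσ : ∀ k h, 0 ≤ σ k h) {n : ℕ} (x : Fin n → Ω) :
    0 ≤ σ.prob x :=
  prod_nonneg fun _ _ => hσ _ _ _

theorem sum_prob_mul_prod_le_one [Fintype Ω] {σ : Strategy Ω} (hσ : ∀ k h, 0 ≤ σ k h)
    {r : Ω → ℝ} (hr : 0 ≤ r) (hstep : ∀ k h, ∑ y, σ k h y * r y ≤ 1) (n : ℕ) :
    ∑ x : Fin n → Ω, σ.prob x * ∏ i, r (x i) ≤ 1 := by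
  induction n with
  | zero => simp [prob]
  | succ n ih =>
    calc ∑ z : Fin (n + 1) → Ω, σ.prob z * ∏ i, r (z i)
        = ∑ x : Fin n → Ω, (σ.prob x * ∏ i, r (x i)) * ∑ y, σ n x y * r y := by
          simp only [Fin.sum_univ_pi_snoc, prob_snoc, Fin.prod_univ_castSucc, Fin.snoc_castSucc,
            Fin.snoc_last, mul_sum]
          congr 1 with x
          congr 1 with y
          ring
      _ ≤ ∑ x : Fin n → Ω, σ.prob x * ∏ i, r (x i) := by
          exact sum_le_sum fun x _ => mul_le_of_le_one_right
            (mul_nonneg (prob_nonneg hσ x) (prod_nonneg fun i _ => hr _)) (hstep n x)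
      _ ≤ 1 := ih

end Strategy

theorem likelihood_ratio_supermartingale_general {Ω : Type*} [Fintype Ω]
    (Q : Set (Ω → ℝ)) (hQ : ∀ q ∈ Q, IsProbDist q)
    (hQconv : Convex ℝ Q)
    (pstar : Ω → ℝ) (hpstar : IsProbDist pstar)
    (qstar : Ω → ℝ) (hqstar : qstar ∈ Q)
    (hmin : ∀ q ∈ Q, relEnt pstar qstar ≤ relEnt pstar q)
    (hfin : relEnt pstar qstar ≠ ⊤) :
    ∀ σ : Strategy Ω, σ.Valid Q → ∀ n : ℕ,
      ∑ x : Fin n → Ω, σ.prob x * ∏ i, pstar (x i) / qstar (x i) ≤ 1 := by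
  intro σ hσ n
  have hQ_nonneg : ∀ q ∈ Q, 0 ≤ q := fun q hq => (hQ q hq).1
  exact σ.sum_prob_mul_prod_le_one (fun k h => hQ_nonneg _ (hσ k h))
    (fun x => div_nonneg (hpstar.1 x) (hQ_nonneg qstar hqstar x))
    (fun k h => sum_mul_div_le_one_of_relEnt_le hQ_nonneg hQconv hpstar.2 hqstar hmin hfin
      (hσ k h)) n

/-- Supermartingale property of the likelihood ratio: if `q* ∈ Q` minimizes `D(p*‖q)` over
the closed convex set `Q` with `D(p*‖q*) < ∞`, then for every adaptive `Q`-strategy `q̂` and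
every `n`, the expected likelihood ratio satisfies
`E_{q̂}[ ∏_{i=1}^n p*(X_i)/q*(X_i) ] ≤ 1`. -/
theorem likelihood_ratio_supermartingale {Ω : Type*} [Fintype Ω]
    (Q : Set (Ω → ℝ)) (hQ : ∀ q ∈ Q, IsProbDist q)
    (hQclosed : IsClosed Q) (hQconv : Convex ℝ Q)
    (pstar : Ω → ℝ) (hpstar : IsProbDist pstar)
    (qstar : Ω → ℝ) (hqstar : qstar ∈ Q)
    (hmin : ∀ q ∈ Q, relEnt pstar qstar ≤ relEnt pstar q)
    (hfin : relEnt pstar qstar ≠ ⊤) :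
    ∀ σ : Strategy Ω, σ.Valid Q → ∀ n : ℕ,
      ∑ x : Fin n → Ω, σ.prob x * ∏ i, pstar (x i) / qstar (x i) ≤ 1 :=
  likelihood_ratio_supermartingale_general Q hQ hQconv pstar hpstar qstar hqstar hmin hfin
end
end
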